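/- arXiv:1804.00204 — 2 statements merged into one kernel-verified Lean document; each statement's English description precedes it below -/
import Mathlib

section
/- Let T ∈ R_+^{m1×⋯×md} be nonnegative and t > 1. Then ‖T^{∘t}‖_∞ ≤ ‖T‖_{ℓ∞}^{t−1} ‖T‖_∞, and hence ‖T^{∘t}‖_∞^{1/t} ≤ ‖T‖_∞, i.e., s ↦ ‖T^{∘s}‖_∞^{1/s} is nonincreasing on (0,∞). -/
/-- The multilinear form `T × (x₁ ⊗ ⋯ ⊗ x_d)` of a real `d`-tensor of shape `m`. -/
noncomputable def tform {d : ℕ} {m : Fin d → ℕ}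
    (T : ((i : Fin d) → Fin (m i)) → ℝ) (x : (i : Fin d) → Fin (m i) → ℝ) : ℝ :=
  ∑ idx : (i : Fin d) → Fin (m i), T idx * ∏ i, x i (idx i)

/-- Spectral norm of a nonnegative tensor. -/
noncomputable def specNorm {d : ℕ} {m : Fin d → ℕ}
    (T : ((i : Fin d) → Fin (m i)) → ℝ) : ℝ :=
  sSup {r | ∃ x : (i : Fin d) → Fin (m i) → ℝ,
    (∀ i j, 0 ≤ x i j) ∧ (∀ i, ∑ j, (x i j) ^ 2 = 1) ∧ r = tform T x}

/-- The maximal entry (`ℓ∞` norm) of a nonnegative tensor. -/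
noncomputable def linfNorm {d : ℕ} {m : Fin d → ℕ}
    (T : ((i : Fin d) → Fin (m i)) → ℝ) : ℝ :=
  ⨆ idx : (i : Fin d) → Fin (m i), T idx

/-!
Entrywise, `T^{∘t} ≤ ‖T‖_{ℓ∞}^{t-1} T`, and the spectral norm of nonnegative tensors is monotone
and positively homogeneous, which gives the first bound. Since every entry is the value of the
multilinear form at a tuple of coordinate vectors, `‖T‖_{ℓ∞} ≤ ‖T‖_∞`, hence
`‖T^{∘t}‖_∞ ≤ ‖T‖_∞^t`. Applied to `T^{∘s₁}` with exponent `s₂ / s₁ ≥ 1`, this is the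
monotonicity of `s ↦ ‖T^{∘s}‖_∞^{1/s}`.
-/

lemma Real.rpow_le_rpow_sub_one_mul {a L t : ℝ} (ha : 0 ≤ a) (haL : a ≤ L) (ht : 1 ≤ t) :
    a ^ t ≤ L ^ (t - 1) * a := by
  have hsplit : a ^ t = a ^ (t - 1) * a := by
    rw [← Real.rpow_add_one' ha (by linarith), sub_add_cancel]
  rw [hsplit]
  gcongr

lemma le_one_of_sum_sq_eq_one {ι : Type*} [Fintype ι] {v : ι → ℝ} (hv : ∀ j, 0 ≤ v j)
    (hv1 : ∑ j, v j ^ 2 = 1) (j : ι) : v j ≤ 1 := by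
  rw [← pow_le_one_iff_of_nonneg (hv j) two_ne_zero, ← hv1]
  exact Finset.single_le_sum (fun k _ => sq_nonneg (v k)) (Finset.mem_univ j)

section TensorNorms

variable {d : ℕ} {m : Fin d → ℕ} {S T : ((i : Fin d) → Fin (m i)) → ℝ}
  {x : (i : Fin d) → Fin (m i) → ℝ}

lemma tform_nonneg (hT : ∀ idx, 0 ≤ T idx) (hx : ∀ i j, 0 ≤ x i j) : 0 ≤ tform T x :=
  Finset.sum_nonneg fun idx _ => mul_nonneg (hT idx) (Finset.prod_nonneg fun i _ => hx i _)

lemma tform_mono (hST : ∀ idx, S idx ≤ T idx) (hx : ∀ i j, 0 ≤ x i j) :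
    tform S x ≤ tform T x :=
  Finset.sum_le_sum fun idx _ =>
    mul_le_mul_of_nonneg_right (hST idx) (Finset.prod_nonneg fun i _ => hx i _)

lemma tform_const_mul (c : ℝ) : tform (fun idx => c * T idx) x = c * tform T x := by
  simp only [tform, Finset.mul_sum, mul_assoc]

lemma tform_le_sum (hT : ∀ idx, 0 ≤ T idx) (hx : ∀ i j, 0 ≤ x i j)
    (hx1 : ∀ i, ∑ j, x i j ^ 2 = 1) : tform T x ≤ ∑ idx, T idx :=
  Finset.sum_le_sum fun idx _ =>
    mul_le_of_le_one_right (hT idx) <| Finset.prod_le_one (fun i _ => hx i _)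
      fun i _ => le_one_of_sum_sq_eq_one (hx i) (hx1 i) _

lemma tform_le_specNorm (hT : ∀ idx, 0 ≤ T idx) (hx : ∀ i j, 0 ≤ x i j)
    (hx1 : ∀ i, ∑ j, x i j ^ 2 = 1) : tform T x ≤ specNorm T := by
  refine le_csSup ⟨∑ idx, T idx, ?_⟩ ⟨x, hx, hx1, rfl⟩
  rintro r ⟨y, hy, hy1, rfl⟩
  exact tform_le_sum hT hy hy1

lemma specNorm_le {c : ℝ} (hc : 0 ≤ c)
    (h : ∀ x : (i : Fin d) → Fin (m i) → ℝ,
      (∀ i j, 0 ≤ x i j) → (∀ i, ∑ j, x i j ^ 2 = 1) → tform T x ≤ c) :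
    specNorm T ≤ c :=
  Real.sSup_le (by rintro r ⟨x, hx, hx1, rfl⟩; exact h x hx hx1) hc

lemma specNorm_nonneg (hT : ∀ idx, 0 ≤ T idx) : 0 ≤ specNorm T :=
  Real.sSup_nonneg <| by rintro r ⟨x, hx, -, rfl⟩; exact tform_nonneg hT hx

lemma specNorm_mono (hT : ∀ idx, 0 ≤ T idx) (hST : ∀ idx, S idx ≤ T idx) :
    specNorm S ≤ specNorm T :=
  specNorm_le (specNorm_nonneg hT) fun _ hx hx1 =>
    (tform_mono hST hx).trans (tform_le_specNorm hT hx hx1)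

lemma specNorm_const_mul_le (hT : ∀ idx, 0 ≤ T idx) {c : ℝ} (hc : 0 ≤ c) :
    specNorm (fun idx => c * T idx) ≤ c * specNorm T :=
  specNorm_le (mul_nonneg hc (specNorm_nonneg hT)) fun _ hx hx1 => by
    rw [tform_const_mul]
    exact mul_le_mul_of_nonneg_left (tform_le_specNorm hT hx hx1) hc

lemma tform_single (idx : (i : Fin d) → Fin (m i)) :
    tform T (fun i j => if j = idx i then 1 else 0) = T idx := by
  have hprod : ∀ idx' : (i : Fin d) → Fin (m i),
      ∏ i, (if idx' i = idx i then (1 : ℝ) else 0) = if idx' = idx then 1 else 0 := by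
    intro idx'
    by_cases h : idx' = idx
    · simp [h]
    · obtain ⟨i, hi⟩ := Function.ne_iff.mp h
      rw [if_neg h]
      exact Finset.prod_eq_zero (Finset.mem_univ i) (if_neg hi)
  simp only [tform, hprod, mul_ite, mul_one, mul_zero, Finset.sum_ite_eq', Finset.mem_univ,
    if_true]

lemma entry_le_specNorm (hT : ∀ idx, 0 ≤ T idx) (idx : (i : Fin d) → Fin (m i)) :
    T idx ≤ specNorm T := by
  rw [← tform_single (T := T) idx]
  exact tform_le_specNorm hT (fun i j => by positivity) fun i => by simp

lemma entry_le_linfNorm (idx : (i : Fin d) → Fin (m i)) : T idx ≤ linfNorm T :=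
  le_ciSup (Set.finite_range T).bddAbove idx

lemma linfNorm_nonneg (hT : ∀ idx, 0 ≤ T idx) : 0 ≤ linfNorm T :=
  Real.iSup_nonneg hT

lemma linfNorm_le_specNorm (hT : ∀ idx, 0 ≤ T idx) : linfNorm T ≤ specNorm T :=
  Real.iSup_le (entry_le_specNorm hT) (specNorm_nonneg hT)

lemma specNorm_rpow_le_linfNorm_rpow_mul (hT : ∀ idx, 0 ≤ T idx) {t : ℝ} (ht : 1 ≤ t) :
    specNorm (fun idx => T idx ^ t) ≤ linfNorm T ^ (t - 1) * specNorm T := by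
  have hc : 0 ≤ linfNorm T ^ (t - 1) := Real.rpow_nonneg (linfNorm_nonneg hT) _
  calc specNorm (fun idx => T idx ^ t)
      ≤ specNorm (fun idx => linfNorm T ^ (t - 1) * T idx) :=
        specNorm_mono (fun idx => mul_nonneg hc (hT idx)) fun idx =>
          Real.rpow_le_rpow_sub_one_mul (hT idx) (entry_le_linfNorm idx) ht
    _ ≤ linfNorm T ^ (t - 1) * specNorm T := specNorm_const_mul_le hT hc

lemma specNorm_rpow_le_rpow (hT : ∀ idx, 0 ≤ T idx) {t : ℝ} (ht : 1 ≤ t) :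
    specNorm (fun idx => T idx ^ t) ≤ specNorm T ^ t := by
  have hN := specNorm_nonneg hT
  calc specNorm (fun idx => T idx ^ t)
      ≤ linfNorm T ^ (t - 1) * specNorm T := specNorm_rpow_le_linfNorm_rpow_mul hT ht
    _ ≤ specNorm T ^ (t - 1) * specNorm T := by
        gcongr
        · exact linfNorm_nonneg hT
        · exact linfNorm_le_specNorm hT
    _ = specNorm T ^ t := by rw [← Real.rpow_add_one' hN (by linarith), sub_add_cancel]

end TensorNorms

theorem spectral_norm_power_monotone_general
    (d : ℕ) (m : Fin d → ℕ)
    (T : ((i : Fin d) → Fin (m i)) → ℝ) (hT : ∀ idx, 0 ≤ T idx) :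
    (∀ t : ℝ, 1 < t →
      specNorm (fun idx => T idx ^ t) ≤ linfNorm T ^ (t - 1) * specNorm T ∧
      specNorm (fun idx => T idx ^ t) ^ (1 / t) ≤ specNorm T) ∧
    (∀ s₁ s₂ : ℝ, 0 < s₁ → s₁ ≤ s₂ →
      specNorm (fun idx => T idx ^ s₂) ^ (1 / s₂) ≤
        specNorm (fun idx => T idx ^ s₁) ^ (1 / s₁)) := by
  have hpow : ∀ s : ℝ, 0 ≤ specNorm (fun idx => T idx ^ s) := fun s =>
    specNorm_nonneg fun idx => Real.rpow_nonneg (hT idx) s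
  refine ⟨fun t ht => ⟨specNorm_rpow_le_linfNorm_rpow_mul hT ht.le, ?_⟩,
    fun s₁ s₂ hs₁ hs₁₂ => ?_⟩
  · rw [one_div, Real.rpow_inv_le_iff_of_pos (hpow t) (specNorm_nonneg hT) (by linarith)]
    exact specNorm_rpow_le_rpow hT ht.le
  · have hs₂ : 0 < s₂ := hs₁.trans_le hs₁₂
    have hTs₁ : ∀ idx, 0 ≤ T idx ^ s₁ := fun idx => Real.rpow_nonneg (hT idx) s₁
    have hbound := specNorm_rpow_le_rpow hTs₁ ((one_le_div hs₁).mpr hs₁₂)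
    simp only [← Real.rpow_mul (hT _), mul_div_cancel₀ _ hs₁.ne'] at hbound
    rw [one_div, Real.rpow_inv_le_iff_of_pos (hpow s₂) (Real.rpow_nonneg (hpow s₁) _) hs₂,
      ← Real.rpow_mul (hpow s₁), one_div_mul_eq_div]
    exact hbound

/-- For `t > 1`, `‖T^{∘t}‖_∞ ≤ ‖T‖_{ℓ∞}^{t-1} ‖T‖_∞`, hence
`‖T^{∘t}‖_∞^{1/t} ≤ ‖T‖_∞` and `s ↦ ‖T^{∘s}‖_∞^{1/s}` is nonincreasing on `(0,∞)`. -/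
theorem spectral_norm_power_monotone
    (d : ℕ) (m : Fin d → ℕ) (hm : ∀ i, 0 < m i)
    (T : ((i : Fin d) → Fin (m i)) → ℝ) (hT : ∀ idx, 0 ≤ T idx) :
    (∀ t : ℝ, 1 < t →
      specNorm (fun idx => T idx ^ t) ≤ linfNorm T ^ (t - 1) * specNorm T ∧
      specNorm (fun idx => T idx ^ t) ^ (1 / t) ≤ specNorm T) ∧
    (∀ s₁ s₂ : ℝ, 0 < s₁ → s₁ ≤ s₂ →
      specNorm (fun idx => T idx ^ s₂) ^ (1 / s₂) ≤
        specNorm (fun idx => T idx ^ s₁) ^ (1 / s₁)) :=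
  spectral_norm_power_monotone_general d m T hT
end

section
/- Kingman-type inequality for matrices: let F, G ∈ R_+^{n×n} be nonnegative matrices with positive eigenvectors u, v > 0 (F u = ρ_F u, G v = ρ_G v), and let α, β > 0 with α+β=1. Then the matrix H with h_{ij} = f_{ij}^α g_{ij}^β satisfies H x ≤ ρ_F^α ρ_G^β x componentwise, where x_i = u_i^α v_i^β; consequently, if H has a nonnegative eigenvector with eigenvalue ρ_H (e.g. its Perron root), then ρ_H ≤ ρ_F^α ρ_G^β. -/
/-!
Writing `h_{ij} x_j = (f_{ij} u_j)^α (g_{ij} v_j)^β`, Hölder's inequality with the conjugate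
exponents `1/α` and `1/β` bounds the `i`-th row sum by `(ρ_F u_i)^α (ρ_G v_i)^β = ρ_F^α ρ_G^β x_i`.
For an eigenvector `y ≥ 0` of `H`, scale `x` down to the smallest `t x` dominating `y`; at a
coordinate where they touch, `ρ_H y_i ≤ t (H x)_i ≤ ρ_F^α ρ_G^β y_i`.
-/

open Finset Matrix

theorem Real.sum_rpow_mul_rpow_le {ι : Type*} (s : Finset ι) {f g : ι → ℝ}
    (hf : ∀ i ∈ s, 0 ≤ f i) (hg : ∀ i ∈ s, 0 ≤ g i) {α β : ℝ} (hα : 0 < α) (hβ : 0 < β)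
    (hαβ : α + β = 1) :
    ∑ i ∈ s, f i ^ α * g i ^ β ≤ (∑ i ∈ s, f i) ^ α * (∑ i ∈ s, g i) ^ β := by
  have hpq : α⁻¹.HolderConjugate β⁻¹ :=
    ⟨by rw [inv_inv, inv_inv, inv_one, hαβ], inv_pos.mpr hα, inv_pos.mpr hβ⟩
  have holder := Real.inner_le_Lp_mul_Lq_of_nonneg s hpq
    (fun i hi => Real.rpow_nonneg (hf i hi) α) (fun i hi => Real.rpow_nonneg (hg i hi) β)
  simp only [one_div, inv_inv] at holder
  rwa [sum_congr rfl fun i hi => Real.rpow_rpow_inv (hf i hi) hα.ne',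
    sum_congr rfl fun i hi => Real.rpow_rpow_inv (hg i hi) hβ.ne'] at holder

theorem Matrix.hadamard_map_rpow_mulVec_le {ι : Type*} [Fintype ι] {F G : Matrix ι ι ℝ}
    (hF : ∀ i j, 0 ≤ F i j) (hG : ∀ i j, 0 ≤ G i j) {u v : ι → ℝ} (hu : 0 ≤ u) (hv : 0 ≤ v)
    {ρF ρG : ℝ} (hρF : 0 ≤ ρF) (hρG : 0 ≤ ρG) (hFu : F *ᵥ u = ρF • u)
    (hGv : G *ᵥ v = ρG • v) {α β : ℝ} (hα : 0 < α) (hβ : 0 < β) (hαβ : α + β = 1) :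
    (F.map (· ^ α) ⊙ G.map (· ^ β)) *ᵥ (u ^ α * v ^ β) ≤ (ρF ^ α * ρG ^ β) • (u ^ α * v ^ β) := by
  intro i
  have hFu_i : ∑ j, F i j * u j = ρF * u i := congrFun hFu i
  have hGv_i : ∑ j, G i j * v j = ρG * v i := congrFun hGv i
  calc ∑ j, F i j ^ α * G i j ^ β * (u j ^ α * v j ^ β)
      = ∑ j, (F i j * u j) ^ α * (G i j * v j) ^ β := by
        refine sum_congr rfl fun j _ => ?_
        rw [Real.mul_rpow (hF i j) (hu j), Real.mul_rpow (hG i j) (hv j)]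
        ring
    _ ≤ (ρF * u i) ^ α * (ρG * v i) ^ β := by
        rw [← hFu_i, ← hGv_i]
        exact Real.sum_rpow_mul_rpow_le _ (fun j _ => mul_nonneg (hF i j) (hu j))
          (fun j _ => mul_nonneg (hG i j) (hv j)) hα hβ hαβ
    _ = ρF ^ α * ρG ^ β * (u i ^ α * v i ^ β) := by
        rw [Real.mul_rpow hρF (hu i), Real.mul_rpow hρG (hv i)]
        ring

theorem exists_pos_le_smul_and_eq {ι : Type*} [Finite ι] {x y : ι → ℝ} (hx : ∀ i, 0 < x i)
    (hy : 0 ≤ y) (hy0 : y ≠ 0) : ∃ t > 0, y ≤ t • x ∧ ∃ i, y i = t * x i := by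
  obtain ⟨j, hj⟩ : ∃ j, y j ≠ 0 := Function.ne_iff.mp hy0
  have : Nonempty ι := ⟨j⟩
  obtain ⟨i, hi⟩ := Finite.exists_max fun k => y k / x k
  refine ⟨y i / x i, ?_, fun k => ?_, i, (div_mul_cancel₀ _ (hx i).ne').symm⟩
  · exact (div_pos ((hy j).lt_of_ne' hj) (hx j)).trans_le (hi j)
  · exact (div_le_iff₀ (hx k)).mp (hi k)

/-- The Collatz–Wielandt upper bound. -/
theorem Matrix.le_of_mulVec_le_smul {ι : Type*} [Fintype ι] {H : Matrix ι ι ℝ}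
    (hH : ∀ i j, 0 ≤ H i j) {x : ι → ℝ} (hx : ∀ i, 0 < x i) {c : ℝ} (hHx : H *ᵥ x ≤ c • x)
    {y : ι → ℝ} (hy : 0 ≤ y) (hy0 : y ≠ 0) {ρ : ℝ} (hHy : H *ᵥ y = ρ • y) : ρ ≤ c := by
  obtain ⟨t, ht, hyx, i, hyi⟩ := exists_pos_le_smul_and_eq hx hy hy0
  have hyi_pos : 0 < y i := hyi ▸ mul_pos ht (hx i)
  suffices ρ * y i ≤ c * y i from le_of_mul_le_mul_right this hyi_pos
  calc ρ * y i = ∑ j, H i j * y j := (congrFun hHy i).symm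
    _ ≤ ∑ j, H i j * (t * x j) := sum_le_sum fun j _ => mul_le_mul_of_nonneg_left (hyx j) (hH i j)
    _ = t * ∑ j, H i j * x j := by rw [mul_sum]; exact sum_congr rfl fun j _ => by ring
    _ ≤ t * (c * x i) := mul_le_mul_of_nonneg_left (hHx i) ht.le
    _ = c * y i := by rw [hyi]; ring

/-- Kingman-type inequality for nonnegative matrices: if `F u = ρ_F u`,
`G v = ρ_G v` with `u, v > 0`, `α, β > 0`, `α + β = 1`, then the matrix
`H = F^{∘α} ∘ G^{∘β}` satisfies `H x ≤ ρ_F^α ρ_G^β x` componentwise for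
`x = u^{∘α} ∘ v^{∘β}`; consequently every eigenvalue of `H` with a nonnegative
eigenvector is at most `ρ_F^α ρ_G^β`. -/
theorem kingman_matrix_ineq
    (n : ℕ) (F G : Matrix (Fin n) (Fin n) ℝ)
    (hF : ∀ i j, 0 ≤ F i j) (hG : ∀ i j, 0 ≤ G i j)
    (u v : Fin n → ℝ) (hu : ∀ i, 0 < u i) (hv : ∀ i, 0 < v i)
    (ρF ρG : ℝ) (hρF : 0 ≤ ρF) (hρG : 0 ≤ ρG)
    (hFu : ∀ i, ∑ j, F i j * u j = ρF * u i)
    (hGv : ∀ i, ∑ j, G i j * v j = ρG * v i)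
    (α β : ℝ) (hα : 0 < α) (hβ : 0 < β) (hαβ : α + β = 1)
    (H : Matrix (Fin n) (Fin n) ℝ) (hH : ∀ i j, H i j = F i j ^ α * G i j ^ β)
    (x : Fin n → ℝ) (hx : ∀ i, x i = u i ^ α * v i ^ β) :
    (∀ i, ∑ j, H i j * x j ≤ ρF ^ α * ρG ^ β * x i) ∧
    (∀ (ρH : ℝ) (y : Fin n → ℝ), (∀ i, 0 ≤ y i) → y ≠ 0 →
      (∀ i, ∑ j, H i j * y j = ρH * y i) → ρH ≤ ρF ^ α * ρG ^ β) := by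
  obtain rfl : H = F.map (· ^ α) ⊙ G.map (· ^ β) := Matrix.ext hH
  obtain rfl : x = u ^ α * v ^ β := funext hx
  have hHx := hadamard_map_rpow_mulVec_le hF hG (fun i => (hu i).le) (fun i => (hv i).le)
    hρF hρG (funext hFu) (funext hGv) hα hβ hαβ
  have hH_nonneg (i j : Fin n) : 0 ≤ F i j ^ α * G i j ^ β :=
    mul_nonneg (Real.rpow_nonneg (hF i j) α) (Real.rpow_nonneg (hG i j) β)
  have hx_pos (i : Fin n) : 0 < u i ^ α * v i ^ β :=
    mul_pos (Real.rpow_pos_of_pos (hu i) α) (Real.rpow_pos_of_pos (hv i) β)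
  exact ⟨hHx, fun ρH y hy hy0 hHy =>
    le_of_mulVec_le_smul hH_nonneg hx_pos hHx hy hy0 (funext hHy)⟩
end
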